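/- arXiv:2002.11614 — 2 statements merged into one kernel-verified Lean document; each statement's English description precedes it below -/
import Mathlib

section
/- For v ∈ RG, the matrix [I_n | σ(v)] satisfies [I_n | σ(v)]·[I_n | σ(v)]^T = 0 if and only if v·v^T = −1 in RG. In particular, in that case v is a unit of RG. -/
/-!
The map σ : RG → Mat_G(R) is an injective ring homomorphism with σ(vᵀ) = σ(v)ᵀ, so
[I | σ(v)]·[I | σ(v)]ᵀ = I + σ(v)σ(v)ᵀ = σ(1 + v vᵀ), which vanishes iff v vᵀ = -1.
In that case -vᵀ is a right inverse of v; it is also a left inverse because a one-sided inverse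
of a square matrix over a commutative ring is two-sided, and σ reflects this back to RG.
-/

open Matrix

/-- The matrix σ(v) of a group ring element, with (i,j) entry the coefficient of i⁻¹ * j. -/
noncomputable def sigmaMat {R G : Type*} [Semiring R] [Group G] (v : MonoidAlgebra R G) :
    Matrix G G R := Matrix.of fun i j => v.coeff (i⁻¹ * j)

/-- The canonical involution on a group ring, sending Σ αᵢ gᵢ to Σ αᵢ gᵢ⁻¹. -/
noncomputable def transInvol {R G : Type*} [Semiring R] [Group G] (v : MonoidAlgebra R G) :
    MonoidAlgebra R G := MonoidAlgebra.ofCoeff (Finsupp.equivMapDomain (Equiv.inv G) v.coeff)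
/-- The Euclidean dual of a linear code C ⊆ R^ι. -/
noncomputable def dualCode {R ι : Type*} [CommRing R] [Fintype ι] (C : Submodule R (ι → R)) :
    Submodule R (ι → R) where
  carrier := {x | ∀ c ∈ C, ∑ i, x i * c i = 0}
  add_mem' := by
    intro a b ha hb c hc
    have h1 := ha c hc
    have h2 := hb c hc
    simp only [Pi.add_apply, add_mul, Finset.sum_add_distrib, h1, h2, add_zero]
  zero_mem' := by intro c hc; simp
  smul_mem' := by
    intro r x hx c hc
    have h := hx c hc
    simp only [Pi.smul_apply, smul_eq_mul, mul_assoc]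
    rw [← Finset.mul_sum, h, mul_zero]
theorem MonoidAlgebra.coeff_mul_eq_sum {R G : Type*} [Semiring R] [Group G] [Fintype G]
    (x y : MonoidAlgebra R G) (g : G) :
    (x * y).coeff g = ∑ h, x.coeff h * y.coeff (h⁻¹ * g) := by
  rw [MonoidAlgebra.coeff_mul_apply_left, Finsupp.sum_fintype]
  simp

theorem Matrix.fromCols_one_mul_transpose_self {n R : Type*} [Fintype n] [DecidableEq n]
    [Semiring R] (A : Matrix n n R) :
    Matrix.fromCols (1 : Matrix n n R) A * (Matrix.fromCols (1 : Matrix n n R) A)ᵀ =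
      1 + A * Aᵀ := by
  rw [transpose_fromCols, fromCols_mul_fromRows, transpose_one, mul_one]

section sigmaMat

variable {R G : Type*} [Semiring R] [Group G]

theorem sigmaMat_injective : Function.Injective (sigmaMat (R := R) (G := G)) := by
  intro x y h
  ext g
  simpa [sigmaMat] using congrFun (congrFun h 1) g

theorem sigmaMat_one [DecidableEq G] : sigmaMat (1 : MonoidAlgebra R G) = 1 := by
  ext i j
  simp [sigmaMat, MonoidAlgebra.one_def, MonoidAlgebra.coeff_single, Finsupp.single_apply,
    Matrix.one_apply, inv_mul_eq_one, eq_comm]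

theorem sigmaMat_zero : sigmaMat (0 : MonoidAlgebra R G) = 0 := by
  ext i j
  simp [sigmaMat]

theorem sigmaMat_add (x y : MonoidAlgebra R G) : sigmaMat (x + y) = sigmaMat x + sigmaMat y := by
  ext i j
  simp [sigmaMat]

theorem sigmaMat_mul [Fintype G] (x y : MonoidAlgebra R G) :
    sigmaMat (x * y) = sigmaMat x * sigmaMat y := by
  ext i j
  simp only [sigmaMat, Matrix.mul_apply, Matrix.of_apply, MonoidAlgebra.coeff_mul_eq_sum]
  exact Fintype.sum_equiv (Equiv.mulLeft i) _ _ fun k => by simp [mul_assoc]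

theorem sigmaMat_transInvol (v : MonoidAlgebra R G) : sigmaMat (transInvol v) = (sigmaMat v)ᵀ := by
  ext i j
  simp [sigmaMat, transInvol]

end sigmaMat

theorem isUnit_of_mul_transInvol_eq_neg_one {R G : Type*} [CommRing R] [Group G] [Fintype G]
    [DecidableEq G] {v : MonoidAlgebra R G} (hv : v * transInvol v = -1) : IsUnit v := by
  have right_inv : v * -transInvol v = 1 := by rw [mul_neg, hv, neg_neg]
  have left_inv : -transInvol v * v = 1 := by
    apply sigmaMat_injective
    rw [sigmaMat_mul, sigmaMat_one, mul_eq_one_comm, ← sigmaMat_mul, right_inv, sigmaMat_one]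
  exact ⟨⟨v, -transInvol v, right_inv, left_inv⟩, rfl⟩

theorem stmt_9_general (R G : Type*) [CommRing R] [Group G] [Fintype G] [DecidableEq G]
    (v : MonoidAlgebra R G) :
    ((Matrix.fromCols (1 : Matrix G G R) (sigmaMat v))
        * (Matrix.fromCols (1 : Matrix G G R) (sigmaMat v))ᵀ = 0
      ↔ v * transInvol v = -1) ∧
      (v * transInvol v = -1 → IsUnit v) := by
  refine ⟨?_, isUnit_of_mul_transInvol_eq_neg_one⟩
  rw [Matrix.fromCols_one_mul_transpose_self, ← sigmaMat_transInvol, ← sigmaMat_mul,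
    ← sigmaMat_one, ← sigmaMat_add, sigmaMat_injective.eq_iff' sigmaMat_zero,
    eq_neg_iff_add_eq_zero, add_comm]

/-- [Iₙ | σ(v)]·[Iₙ | σ(v)]ᵀ = 0 iff v·vᵀ = -1 in RG; in that case v is a unit. -/
theorem stmt_9 (R G : Type*) [CommRing R] [Fintype R] [Group G] [Fintype G] [DecidableEq G]
    (v : MonoidAlgebra R G) :
    ((Matrix.fromCols (1 : Matrix G G R) (sigmaMat v))
        * (Matrix.fromCols (1 : Matrix G G R) (sigmaMat v))ᵀ = 0
      ↔ v * transInvol v = -1) ∧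
      (v * transInvol v = -1 → IsUnit v) :=
  stmt_9_general R G v
end

section
/- A vector x ∈ R^n lies in C^⊥ if and only if the element x̄ = Σ x_{g_i^{-1}} g_i lies in the right annihilator R(I) = {w : uw = 0 for all u ∈ I}, where I = Ψ^{-1}(C); moreover the map x ↦ x̄ is a bijection between C^⊥ and R(I). -/
/-!
`x ↦ x̄` is a bijection `R^G ≃ RG`, so only the membership statement needs proof. The coefficient
`(u * x̄)_g = Σ_b x_b u_{gb}` is the inner product of `x` with the left translate `b ↦ u_{gb}` of
the coefficient vector of `u`. Translating the row of `i` in `σ(v)` by `g` gives the row of `g⁻¹ i`,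
so `C` is stable under left translation and `x ∈ C^⊥` forces `u * x̄ = 0` for `u ∈ I`. Conversely
the rows of `σ(v)` are coefficient vectors of elements of `I`, and `(u * x̄)_1 = ⟨x, u⟩`.
-/

section GroupCodes

open MonoidAlgebra Submodule

variable {R G ι : Type*}

theorem MonoidAlgebra.coeff_mul_eq_sum_s15 [Semiring R] [Group G] [Fintype G]
    (u w : MonoidAlgebra R G) (g : G) :
    (u * w).coeff g = ∑ a, u.coeff a * w.coeff (a⁻¹ * g) := by
  rw [coeff_mul_apply_left, Finsupp.sum_fintype]
  intro a
  rw [zero_mul]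

theorem mem_dualCode_span_iff [CommRing R] [Fintype ι] {s : Set (ι → R)} {x : ι → R} :
    x ∈ dualCode (span R s) ↔ ∀ c ∈ s, ∑ i, x i * c i = 0 := by
  refine ⟨fun hx c hc => hx c (subset_span hc), fun hs c hc => ?_⟩
  induction hc using span_induction with
  | mem c hc => exact hs c hc
  | zero => simp
  | add c d _ _ hc hd => simp [mul_add, Finset.sum_add_distrib, hc, hd]
  | smul r c _ hc => simp [mul_left_comm _ r, ← Finset.mul_sum, hc]

section GroupRing

variable [Group G]

noncomputable def sigmaCode [Semiring R] (v : MonoidAlgebra R G) : Submodule R (G → R) :=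
  span R (Set.range fun i => sigmaMat v i)

theorem sigmaMat_apply_mul_left [Semiring R] (v : MonoidAlgebra R G) (i g b : G) :
    sigmaMat v i (g * b) = sigmaMat v (g⁻¹ * i) b := by
  simp [sigmaMat, mul_assoc]

theorem comp_mul_left_mem_sigmaCode [Semiring R] {v : MonoidAlgebra R G} {f : G → R}
    (hf : f ∈ sigmaCode v) (g : G) : (fun b => f (g * b)) ∈ sigmaCode v := by
  have hmap : (sigmaCode v).map (LinearMap.funLeft R R (g * ·)) ≤ sigmaCode v := by
    refine (map_span_le _ _ _).mpr ?_
    rintro _ ⟨i, rfl⟩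
    refine subset_span ⟨g⁻¹ * i, ?_⟩
    ext b
    exact (sigmaMat_apply_mul_left v i g b).symm
  exact hmap ⟨f, hf, rfl⟩

variable [Fintype G]

noncomputable def invCoeffEquiv [Semiring R] : (G → R) ≃ MonoidAlgebra R G where
  toFun x := ofCoeff (Finsupp.equivFunOnFinite.symm fun g => x g⁻¹)
  invFun w g := w.coeff g⁻¹
  left_inv x := by ext g; simp
  right_inv w := by ext g; simp

theorem coeff_mul_invCoeffEquiv [CommSemiring R] (u : MonoidAlgebra R G) (x : G → R) (g : G) :
    (u * invCoeffEquiv x).coeff g = ∑ b, x b * u.coeff (g * b) := by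
  rw [coeff_mul_eq_sum_s15, ← Equiv.sum_comp (Equiv.mulLeft g)]
  refine Finset.sum_congr rfl fun b _ => ?_
  simp [invCoeffEquiv, mul_comm]

theorem mem_dualCode_sigmaCode_iff [CommRing R] (v : MonoidAlgebra R G) (x : G → R) :
    x ∈ dualCode (sigmaCode v) ↔
      ∀ u : MonoidAlgebra R G, ⇑u.coeff ∈ sigmaCode v → u * invCoeffEquiv x = 0 := by
  constructor
  · intro hx u hu
    ext g
    rw [coeff_mul_invCoeffEquiv]
    exact hx _ (comp_mul_left_mem_sigmaCode hu g)
  · intro hx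
    refine mem_dualCode_span_iff.mpr ?_
    rintro _ ⟨i, rfl⟩
    let u : MonoidAlgebra R G := ofCoeff (Finsupp.equivFunOnFinite.symm (sigmaMat v i))
    have hu : u * invCoeffEquiv x = 0 := hx u (subset_span ⟨i, rfl⟩)
    simpa [coeff_mul_invCoeffEquiv, u] using congr_arg (fun w => w.coeff 1) hu

end GroupRing

end GroupCodes

theorem stmt_15_general (R G : Type*) [CommRing R] [Group G] [Fintype G]
    (v : MonoidAlgebra R G) :
    let C := Submodule.span R (Set.range fun i => sigmaMat v i)
    let Iv := {u : MonoidAlgebra R G | (fun g => u.coeff g) ∈ C}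
    let RI := {w : MonoidAlgebra R G | ∀ u ∈ Iv, u * w = 0}
    let bar : (G → R) → MonoidAlgebra R G :=
      fun x => MonoidAlgebra.ofCoeff (Finsupp.equivFunOnFinite.symm (fun g => x g⁻¹))
    (∀ x : G → R, x ∈ dualCode C ↔ bar x ∈ RI) ∧
      Set.BijOn bar (dualCode C : Set (G → R)) RI := by
  intro C Iv RI bar
  have key : ∀ x, x ∈ dualCode C ↔ bar x ∈ RI := mem_dualCode_sigmaCode_iff v
  exact ⟨key, invCoeffEquiv.bijOn fun x => (key x).symm⟩

/-- x ∈ C^⊥ iff x̄ = Σ x_{gᵢ⁻¹} gᵢ lies in the right annihilator R(I) of I = Ψ⁻¹(C);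
    moreover x ↦ x̄ is a bijection from C^⊥ onto R(I). -/
theorem stmt_15 (R G : Type*) [CommRing R] [Fintype R] [Group G] [Fintype G]
    (v : MonoidAlgebra R G) :
    let C := Submodule.span R (Set.range fun i => sigmaMat v i)
    let Iv := {u : MonoidAlgebra R G | (fun g => u.coeff g) ∈ C}
    let RI := {w : MonoidAlgebra R G | ∀ u ∈ Iv, u * w = 0}
    let bar : (G → R) → MonoidAlgebra R G :=
      fun x => MonoidAlgebra.ofCoeff (Finsupp.equivFunOnFinite.symm (fun g => x g⁻¹))
    (∀ x : G → R, x ∈ dualCode C ↔ bar x ∈ RI) ∧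
      Set.BijOn bar (dualCode C : Set (G → R)) RI :=
  stmt_15_general R G v
end
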